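/- Let m ≥ 3 be odd and k ≥ 2, and let QD_{m,k} = ⟨x, y | x² = y^{2k} = 1, [x,y^k]_m = [y^k,x]_m⟩, where [a,b]_m denotes the alternating product aba⋯ of length m. Then for every b ∈ {1,…,2k−1}, the element x y^b does not belong to S ∪ {1}, where S = {x, y, y², …, y^{2k−1}}. In particular, (QD_{m,k}, {x,y}) is a strongly marked group. -/
import Mathlib


namespace Paper

/-- The alternating list `(a, b, a, b, ...)` of length `m`. -/
def altList {α : Type*} (a b : α) : ℕ → List α
  | 0 => []
  | n + 1 => a :: altList b a n

/-- The alternating product `a b a ⋯` of length `m` in a monoid. -/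
def altProd {G : Type*} [Monoid G] (a b : G) (m : ℕ) : G := (altList a b m).prod

variable {G : Type*} [Group G]

/-- The set of syllables of a generating set `X`: nontrivial powers of elements of `X`. -/
def Syll (X : Set G) : Set G := {s | ∃ x ∈ X, ∃ a : ℤ, s = x ^ a ∧ s ≠ 1}

/-- A syllabic word: a list all of whose entries are syllables. -/
def SylWord (X : Set G) (w : List G) : Prop := ∀ s ∈ w, s ∈ Syll X

/-- The syllabic length of an element: minimal length of a syllabic word representing it. -/
noncomputable def sylLen (X : Set G) (g : G) : ℕ :=
  sInf {n | ∃ w : List G, SylWord X w ∧ w.prod = g ∧ w.length = n}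

/-- A syllabic word is reduced if its length is the syllabic length of the element
it represents. -/
def Reduced (X : Set G) (w : List G) : Prop :=
  SylWord X w ∧ w.length = sylLen X w.prod

/-- Elementary M-operation of type I. -/
def MOpI (X : Set G) (w w' : List G) : Prop :=
  ∃ (w₁ w₂ : List G) (s t : G), s ∈ Syll X ∧ t ∈ Syll X ∧
    w = w₁ ++ [s, t] ++ w₂ ∧
    ((s * t ∈ Syll X ∧ w' = w₁ ++ [s * t] ++ w₂) ∨ (s * t = 1 ∧ w' = w₁ ++ w₂))

/-- Elementary M-operation of type II. -/
def MOpII (X : Set G) (w w' : List G) : Prop :=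
  ∃ (w₁ w₂ : List G) (s t : G) (m : ℕ), s ∈ Syll X ∧ t ∈ Syll X ∧ 2 ≤ m ∧
    altProd s t m = altProd t s m ∧ sylLen X (altProd s t m) = m ∧
    w = w₁ ++ altList s t m ++ w₂ ∧ w' = w₁ ++ altList t s m ++ w₂

/-- Elementary M-operation (of type I or type II). -/
def MOp (X : Set G) (w w' : List G) : Prop := MOpI X w w' ∨ MOpII X w w'

/-- A syllabic word is M-reduced if its length cannot be shortened by any finite
sequence of elementary M-operations. -/
def MReduced (X : Set G) (w : List G) : Prop :=
  ∀ w', Relation.ReflTransGen (MOp X) w w' → ¬ w'.length < w.length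

/-- Property D: a syllabic word is reduced iff it is M-reduced, and any two reduced
syllabic words representing the same element are connected by a finite sequence of
elementary M-operations of type II. -/
def PropertyD (X : Set G) : Prop :=
  (∀ w : List G, SylWord X w → (Reduced X w ↔ MReduced X w)) ∧
  (∀ w w' : List G, Reduced X w → Reduced X w' → w.prod = w'.prod →
    Relation.ReflTransGen (MOpII X) w w')

/-- `(G, X)` is a marked group: `X` generates `G`. -/
def Marked (X : Set G) : Prop := Subgroup.closure X = ⊤

/-- `(G, X)` is a strongly marked group. -/
def StronglyMarked (X : Set G) : Prop :=
  Marked X ∧ (1 : G) ∉ X ∧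
    ∀ x ∈ X, ∀ y ∈ X, ∀ a b : ℤ, x ^ a ≠ 1 → y ^ b ≠ 1 →
      (x ^ a * y ^ b ∈ Syll X ∨ x ^ a * y ^ b = 1) → x = y

/-- The data of a Dyer graph: a simplicial graph with edge labels `m ≥ 2` and vertex
labels `f ∈ ℕ_{≥2} ∪ {∞}` such that any edge with `m(e) ≠ 2` has both endpoints
labelled `2`. -/
structure DyerData (V : Type*) where
  adj : V → V → Prop
  symm : ∀ u v, adj u v → adj v u
  loopless : ∀ v, ¬ adj v v
  m : V → V → ℕ
  m_symm : ∀ u v, m u v = m v u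
  m_two_le : ∀ u v, adj u v → 2 ≤ m u v
  f : V → ℕ∞
  f_two_le : ∀ v, 2 ≤ f v
  dyer : ∀ u v, adj u v → m u v ≠ 2 → f u = 2 ∧ f v = 2

/-- The defining relators of the Dyer group of `Δ`. -/
def DyerData.rels {V : Type*} (Δ : DyerData V) : Set (FreeGroup V) :=
  {r | ∃ v, Δ.f v ≠ ⊤ ∧ r = (FreeGroup.of v) ^ (Δ.f v).toNat} ∪
  {r | ∃ u v, Δ.adj u v ∧
    r = altProd (FreeGroup.of u) (FreeGroup.of v) (Δ.m u v) *
        (altProd (FreeGroup.of v) (FreeGroup.of u) (Δ.m u v))⁻¹}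

/-- The Dyer group of the data `Δ`. -/
abbrev DyerGroup {V : Type*} (Δ : DyerData V) := PresentedGroup Δ.rels

/-- The standard generating set of a Dyer group. -/
def DyerGens {V : Type*} (Δ : DyerData V) : Set (DyerGroup Δ) :=
  Set.range (PresentedGroup.of (rels := Δ.rels))


/-- Defining relators of the quasi-Dyer group
`QD_{m,k} = ⟨x, y | x² = y^{2k} = 1, [x,y^k]_m = [y^k,x]_m⟩`. -/
def qdRels (m k : ℕ) : Set (FreeGroup (Fin 2)) :=
  { (FreeGroup.of 0) ^ 2, (FreeGroup.of 1) ^ (2 * k),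
    altProd (FreeGroup.of 0) ((FreeGroup.of 1) ^ k) m *
      (altProd ((FreeGroup.of 1) ^ k) (FreeGroup.of 0) m)⁻¹ }

/-- The quasi-Dyer group `QD_{m,k}`. -/
abbrev QDmk (m k : ℕ) := PresentedGroup (qdRels m k)

/-! ### Auxiliary lemmas -/

section AltAux

lemma altList_map' {α β : Type*} (f : α → β) : ∀ (n : ℕ) (a b : α),
    (altList a b n).map f = altList (f a) (f b) n
  | 0, _, _ => rfl
  | n + 1, a, b => by
    rw [altList, List.map_cons, altList_map' f n b a, altList]

lemma map_altProd' {G H : Type*} [Monoid G] [Monoid H] (φ : G →* H) (a b : G) (n : ℕ) :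
    φ (altProd a b n) = altProd (φ a) (φ b) n := by
  rw [altProd, altProd, ← altList_map' φ, map_list_prod]

lemma altProd_succ_succ' {G : Type*} [Monoid G] (a b : G) (n : ℕ) :
    altProd a b (n + 2) = a * b * altProd a b n := by
  show (altList a b (n+2)).prod = _
  rw [altList, altList, List.prod_cons, List.prod_cons, altProd, mul_assoc]

lemma altProd_even' {G : Type*} [Monoid G] (a b : G) (q : ℕ) :
    altProd a b (2 * q) = (a * b) ^ q := by
  induction q with
  | zero => simp [altProd, altList]
  | succ n ih =>
    have h : 2 * (n + 1) = 2 * n + 2 := by ring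
    rw [h, altProd_succ_succ', ih, pow_succ']

lemma altProd_odd' {G : Type*} [Monoid G] (a b : G) (q : ℕ) :
    altProd a b (2 * q + 1) = (a * b) ^ q * a := by
  induction q with
  | zero => simp [altProd, altList]
  | succ n ih =>
    have h : 2 * (n + 1) + 1 = (2 * n + 1) + 2 := by ring
    rw [h, altProd_succ_succ', ih, pow_succ']
    simp [mul_assoc]

lemma dihedral_comm' {G : Type*} [Group G] {a b : G} (ha : a * a = 1) (hb : b * b = 1)
    {n : ℕ} (h : (a * b) ^ n = 1) : altProd a b n = altProd b a n := by
  have hba : b * a = (a * b)⁻¹ := by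
    apply eq_inv_of_mul_eq_one_left
    calc b * a * (a * b) = b * (a * a) * b := by group
    _ = 1 := by rw [ha, mul_one, hb]
  rcases Nat.even_or_odd n with ⟨q, hq⟩ | ⟨q, hq⟩
  · have hn : n = 2 * q := by omega
    subst hn
    rw [altProd_even', altProd_even', hba, inv_pow]
    have h2 : (a * b) ^ q * (a * b) ^ q = 1 := by
      rw [← pow_add]; convert h using 2; omega
    exact eq_inv_of_mul_eq_one_left h2
  · have hn : n = 2 * q + 1 := by omega
    subst hn
    rw [altProd_odd', altProd_odd', hba, inv_pow]
    have h2 : (a * b) ^ (q + 1) * (a * b) ^ q = 1 := by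
      rw [← pow_add]; convert h using 2; omega
    rw [← eq_inv_of_mul_eq_one_left h2, pow_succ, mul_assoc, mul_assoc, hb, mul_one]

end AltAux

theorem statement_12 (m k : ℕ) (hm : Odd m) (hm3 : 3 ≤ m) (hk : 2 ≤ k)
    (x y : QDmk m k) (hx : x = PresentedGroup.of 0) (hy : y = PresentedGroup.of 1) :
    (∀ b : ℕ, 1 ≤ b → b ≤ 2 * k - 1 →
      x * y ^ b ∉ insert (1 : QDmk m k)
        ({x} ∪ {s | ∃ c : ℕ, 1 ≤ c ∧ c ≤ 2 * k - 1 ∧ s = y ^ c})) ∧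
    StronglyMarked ({x, y} : Set (QDmk m k)) := by
  subst hx hy
  classical
  set x : QDmk m k := PresentedGroup.of 0 with hxdef
  set y : QDmk m k := PresentedGroup.of 1 with hydef
  -- the first homomorphism, to `Multiplicative (ZMod (2*k))`
  set f₁ : Fin 2 → Multiplicative (ZMod (2 * k)) :=
    ![Multiplicative.ofAdd (k : ZMod (2 * k)), Multiplicative.ofAdd 1] with hf₁
  have hofAddk : (Multiplicative.ofAdd (1 : ZMod (2 * k))) ^ k
      = Multiplicative.ofAdd (k : ZMod (2 * k)) := by
    rw [← ofAdd_nsmul]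
    congr 1
    simp
  have h₁ : ∀ r ∈ qdRels m k, FreeGroup.lift f₁ r = 1 := by
    intro r hr
    rcases hr with rfl | rfl | rfl
    · rw [map_pow, FreeGroup.lift_apply_of]
      show (Multiplicative.ofAdd (k : ZMod (2 * k))) ^ 2 = 1
      rw [← ofAdd_nsmul, ofAdd_eq_one, nsmul_eq_mul]
      have h0 : ((2 * k : ℕ) : ZMod (2 * k)) = 0 := ZMod.natCast_self _
      push_cast at h0 ⊢
      linear_combination h0
    · rw [map_pow, FreeGroup.lift_apply_of]
      show (Multiplicative.ofAdd (1 : ZMod (2 * k))) ^ (2 * k) = 1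
      rw [← ofAdd_nsmul, ofAdd_eq_one, nsmul_eq_mul, mul_one]
      exact_mod_cast ZMod.natCast_self (2 * k)
    · rw [map_mul, map_inv, map_altProd', map_altProd', map_pow, FreeGroup.lift_apply_of,
        FreeGroup.lift_apply_of]
      show altProd (Multiplicative.ofAdd (k : ZMod (2*k)))
          ((Multiplicative.ofAdd (1 : ZMod (2*k))) ^ k) m *
        (altProd ((Multiplicative.ofAdd (1 : ZMod (2*k))) ^ k)
          (Multiplicative.ofAdd (k : ZMod (2*k))) m)⁻¹ = 1
      rw [hofAddk, mul_inv_eq_one]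
  set φ₁ : QDmk m k →* Multiplicative (ZMod (2 * k)) := PresentedGroup.toGroup h₁ with hφ₁
  have hφ₁x : φ₁ x = Multiplicative.ofAdd (k : ZMod (2 * k)) := PresentedGroup.toGroup.of h₁
  have hφ₁y : φ₁ y = Multiplicative.ofAdd (1 : ZMod (2 * k)) := PresentedGroup.toGroup.of h₁
  have hφ₁yz : ∀ c : ℤ, φ₁ (y ^ c) = Multiplicative.ofAdd (c : ZMod (2 * k)) := by
    intro c
    rw [map_zpow, hφ₁y, ← ofAdd_zsmul]
    congr 1
    simp
  -- the second homomorphism, to permutations of `R`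
  have hk1 : 1 < m := by omega
  haveI : Fact (1 < m) := ⟨hk1⟩
  set p : Polynomial (ZMod m) := Polynomial.X ^ k + 1 with hp
  have hpC : p = Polynomial.X ^ k + Polynomial.C 1 := by rw [hp, map_one]
  have hpmonic : p.Monic := by
    rw [hpC]; exact Polynomial.monic_X_pow_add_C _ (by omega)
  have hpdeg : p.natDegree = k := by rw [hpC, Polynomial.natDegree_X_pow_add_C]
  haveI hRnt : Nontrivial (AdjoinRoot p) := by
    refine ⟨⟨1, 0, ?_⟩⟩
    have h1 : (AdjoinRoot.mk p) 1 ≠ 0 :=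
      AdjoinRoot.mk_ne_zero_of_natDegree_lt hpmonic one_ne_zero
        (by rw [Polynomial.natDegree_one, hpdeg]; omega)
    simpa using h1
  set t : AdjoinRoot p := AdjoinRoot.root p with ht
  have htk : t ^ k = -1 := by
    have h0 := AdjoinRoot.eval₂_root p
    rw [hp] at h0
    simp only [Polynomial.eval₂_add, Polynomial.eval₂_pow, Polynomial.eval₂_X,
      Polynomial.eval₂_one] at h0
    have := eq_neg_of_add_eq_zero_left h0
    simpa [ht, hp] using this
  have ht2k : t ^ (2 * k) = 1 := by
    rw [two_mul, pow_add, htk]; ring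
  have hmR : ((m : ℕ) : AdjoinRoot p) = 0 := by
    have : ((m : ℕ) : AdjoinRoot p) = algebraMap (ZMod m) (AdjoinRoot p) ((m : ℕ) : ZMod m) := by
      rw [map_natCast]
    rw [this, ZMod.natCast_self, map_zero]
  set XX : Equiv.Perm (AdjoinRoot p) :=
    ⟨fun r => 1 - r, fun r => 1 - r, fun r => by simp, fun r => by simp⟩ with hXX
  set YY : Equiv.Perm (AdjoinRoot p) :=
    ⟨fun r => t * r, fun r => t ^ (2 * k - 1) * r,
      fun r => by
        simp only
        rw [← mul_assoc, ← pow_succ]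
        have h2 : 2 * k - 1 + 1 = 2 * k := by omega
        rw [h2, ht2k, one_mul],
      fun r => by
        simp only
        rw [← mul_assoc, ← pow_succ']
        have h2 : 2 * k - 1 + 1 = 2 * k := by omega
        rw [h2, ht2k, one_mul]⟩ with hYY
  have hXXf : ∀ r, XX r = 1 - r := fun r => rfl
  have hYYpow : ∀ (n : ℕ) (r : AdjoinRoot p), (YY ^ n) r = t ^ n * r := by
    intro n
    induction n with
    | zero => intro r; simp
    | succ n ih =>
      intro r
      rw [pow_succ, Equiv.Perm.mul_apply, ih]
      show t ^ n * (t * r) = t ^ (n + 1) * r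
      rw [pow_succ, mul_assoc]
  have hYY2k : YY ^ (2 * k) = 1 := by
    ext r
    rw [hYYpow, ht2k, one_mul]
    rfl
  have hXX2 : XX * XX = 1 := by
    ext r
    show XX (XX r) = r
    rw [hXXf, hXXf]
    ring
  have hYYk : ∀ r, (YY ^ k) r = -r := by
    intro r
    rw [hYYpow, htk]
    ring
  have hXYpow : ∀ (n : ℕ) (r : AdjoinRoot p), ((XX * YY ^ k) ^ n) r = (n : AdjoinRoot p) + r := by
    intro n
    induction n with
    | zero => intro r; simp
    | succ n ih =>
      intro r
      rw [pow_succ', Equiv.Perm.mul_apply, Equiv.Perm.mul_apply, hYYk, ih, hXXf]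
      push_cast
      ring
  have hXYm : (XX * YY ^ k) ^ m = 1 := by
    ext r
    rw [hXYpow, hmR, zero_add]
    rfl
  set f₂ : Fin 2 → Equiv.Perm (AdjoinRoot p) := ![XX, YY] with hf₂
  have h₂ : ∀ r ∈ qdRels m k, FreeGroup.lift f₂ r = 1 := by
    intro r hr
    rcases hr with rfl | rfl | rfl
    · rw [map_pow, FreeGroup.lift_apply_of]
      show XX ^ 2 = 1
      rw [pow_two, hXX2]
    · rw [map_pow, FreeGroup.lift_apply_of]
      show YY ^ (2 * k) = 1
      exact hYY2k
    · rw [map_mul, map_inv, map_altProd', map_altProd', map_pow, FreeGroup.lift_apply_of,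
        FreeGroup.lift_apply_of]
      show altProd XX (YY ^ k) m * (altProd (YY ^ k) XX m)⁻¹ = 1
      rw [mul_inv_eq_one]
      refine dihedral_comm' hXX2 ?_ hXYm
      rw [← pow_add, ← two_mul, hYY2k]
  set φ₂ : QDmk m k →* Equiv.Perm (AdjoinRoot p) := PresentedGroup.toGroup h₂ with hφ₂
  have hφ₂x : φ₂ x = XX := PresentedGroup.toGroup.of h₂
  have hφ₂y : φ₂ y = YY := PresentedGroup.toGroup.of h₂
  -- relators hold in the presented group
  have hrel : ∀ r ∈ qdRels m k, PresentedGroup.mk (qdRels m k) r = 1 := by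
    intro r hr
    exact (QuotientGroup.eq_one_iff r).mpr (Subgroup.subset_normalClosure hr)
  have hx2 : x * x = 1 := by
    have := hrel ((FreeGroup.of 0) ^ 2) (by left; rfl)
    rw [map_pow] at this
    rw [← pow_two]
    exact this
  have hy2k : y ^ (2 * k) = 1 := by
    have := hrel ((FreeGroup.of 1) ^ (2 * k)) (by right; left; rfl)
    rw [map_pow] at this
    exact this
  -- key facts
  have hypow_iff : ∀ c : ℤ, y ^ c = 1 ↔ ((2 * k : ℕ) : ℤ) ∣ c := by
    intro c
    constructor
    · intro h
      have := congrArg φ₁ h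
      rw [hφ₁yz, map_one, ofAdd_eq_one] at this
      exact_mod_cast (ZMod.intCast_zmod_eq_zero_iff_dvd c (2 * k)).mp this
    · rintro ⟨d, rfl⟩
      rw [zpow_mul, zpow_natCast, hy2k, one_zpow]
  have hxy : ∀ c : ℤ, x ≠ y ^ c := by
    intro c hcontra
    -- from φ₁ : k ≡ c [ZMOD 2k]
    have h1 := congrArg φ₁ hcontra
    rw [hφ₁x, hφ₁yz] at h1
    have h2 : ((c - (k : ℤ) : ℤ) : ZMod (2 * k)) = 0 := by
      have := Multiplicative.ofAdd.injective h1
      push_cast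
      rw [← this]
      ring
    obtain ⟨d, hd⟩ := (ZMod.intCast_zmod_eq_zero_iff_dvd _ (2 * k)).mp h2
    have hc : c = (k : ℤ) + (2 * k : ℕ) * d := by push_cast at hd ⊢; linarith
    have hyk : y ^ c = y ^ (k : ℕ) := by
      rw [hc, zpow_add, zpow_mul, zpow_natCast, zpow_natCast, hy2k, one_zpow, mul_one]
    rw [hyk] at hcontra
    -- now use φ₂
    have h3 := congrArg φ₂ hcontra
    rw [hφ₂x, map_pow, hφ₂y] at h3
    have h4 := congrArg (fun (e : Equiv.Perm (AdjoinRoot p)) => e 0) h3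
    rw [hXXf, hYYk] at h4
    rw [sub_zero, neg_zero] at h4
    exact one_ne_zero h4
  have hx1 : x ≠ 1 := by
    intro h
    have := hxy 0
    rw [zpow_zero] at this
    exact this h
  have hy1 : ∀ b : ℤ, 1 ≤ b → b ≤ 2 * k - 1 → y ^ b ≠ 1 := by
    intro b hb1 hb2 h
    obtain hdvd := (hypow_iff b).mp h
    have : ((2 * k : ℕ) : ℤ) ≤ b := Int.le_of_dvd (by omega) hdvd
    push_cast at this
    omega
  have hxpow : ∀ a : ℤ, x ^ a = 1 ∨ x ^ a = x := by
    intro a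
    have hx2' : x ^ (2 : ℤ) = 1 := by
      rw [show ((2:ℤ)) = ((2:ℕ):ℤ) by norm_num, zpow_natCast, pow_two, hx2]
    rcases Int.even_or_odd a with ⟨q, hq⟩ | ⟨q, hq⟩
    · left
      have h2 : a = 2 * q := by omega
      rw [h2, zpow_mul, hx2', one_zpow]
    · right
      have h2 : a = 2 * q + 1 := by omega
      rw [h2, zpow_add, zpow_mul, hx2', one_zpow, zpow_one, one_mul]
  -- first statement
  have main1 : ∀ b : ℕ, 1 ≤ b → b ≤ 2 * k - 1 →
      x * y ^ b ∉ insert (1 : QDmk m k)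
        ({x} ∪ {s | ∃ c : ℕ, 1 ≤ c ∧ c ≤ 2 * k - 1 ∧ s = y ^ c}) := by
    intro b hb1 hb2 hmem
    simp only [Set.mem_insert_iff, Set.mem_union, Set.mem_singleton_iff, Set.mem_setOf_eq] at hmem
    rcases hmem with h | h | ⟨c, hc1, hc2, h⟩
    · -- x * y^b = 1
      have : x = y ^ (-(b : ℤ)) := by
        rw [zpow_neg, zpow_natCast]
        exact eq_inv_of_mul_eq_one_left h
      exact hxy _ this
    · -- x * y^b = x
      have : y ^ (b : ℤ) = 1 := by
        rw [zpow_natCast]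
        exact mul_left_cancel (by rw [h, mul_one])
      exact hy1 b (by exact_mod_cast hb1) (by push_cast; omega) this
    · -- x * y^b = y^c
      have : x = y ^ ((c : ℤ) - (b : ℤ)) := by
        have hx' : x = y ^ c * (y ^ b)⁻¹ := by
          rw [← h, mul_assoc, mul_inv_cancel, mul_one]
        rw [hx', zpow_sub, zpow_natCast, zpow_natCast]
      exact hxy _ this
  refine ⟨main1, ?_, ?_, ?_⟩
  · -- Marked
    have hrange : ({x, y} : Set (QDmk m k)) =
        Set.range (PresentedGroup.of : Fin 2 → QDmk m k) := by
      ext g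
      simp only [Set.mem_insert_iff, Set.mem_singleton_iff, Set.mem_range]
      constructor
      · rintro (rfl | rfl)
        · exact ⟨0, rfl⟩
        · exact ⟨1, rfl⟩
      · rintro ⟨i, rfl⟩
        fin_cases i
        · left; rfl
        · right; rfl
    rw [Marked, hrange]
    exact PresentedGroup.closure_range_of _
  · -- 1 ∉ {x, y}
    simp only [Set.mem_insert_iff, Set.mem_singleton_iff]
    push_neg
    constructor
    · exact fun h => hx1 h.symm
    · intro h
      have : y ^ (1 : ℤ) = 1 := by rw [zpow_one]; exact h.symm
      exact hy1 1 (le_refl 1) (by omega) this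
  · -- the syllable condition
    intro x₁ hx₁ x₂ hx₂ a b ha hb hst
    have hSyll : ∀ g : QDmk m k, g ∈ Syll {x, y} → (g = x ∨ ∃ e : ℤ, g = y ^ e ∧ g ≠ 1) := by
      intro g hg
      obtain ⟨z, hz, e, hge, hgne⟩ := hg
      rcases hz with rfl | rfl
      · -- z = x
        rcases hxpow e with h | h
        · exact absurd (hge.trans h) hgne
        · exact Or.inl (hge.trans h)
      · exact Or.inr ⟨e, hge, hgne⟩
    rcases hx₁ with rfl | rfl <;> rcases hx₂ with rfl | rfl
    · rfl
    · -- x₁ = x, x₂ = y : show x = y, derive contradiction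
      exfalso
      have hxa : x ^ a = x := (hxpow a).resolve_left ha
      rw [hxa] at hst
      rcases hst with hst | hst
      · rcases hSyll _ hst with h | ⟨e, he, _⟩
        · -- x * y^b = x ⟹ y^b = 1
          exact hb (mul_left_cancel (by rw [h, mul_one]))
        · -- x * y^b = y^e ⟹ x = y^(e-b)
          refine hxy (e - b) ?_
          rw [zpow_sub, ← he, mul_assoc, mul_inv_cancel, mul_one]
      · -- x * y^b = 1
        refine hxy (-b) ?_
        rw [zpow_neg]
        exact eq_inv_of_mul_eq_one_left hst
    · -- x₁ = y, x₂ = x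
      exfalso
      have hxb : x ^ b = x := (hxpow b).resolve_left hb
      rw [hxb] at hst
      rcases hst with hst | hst
      · rcases hSyll _ hst with h | ⟨e, he, _⟩
        · -- y^a * x = x ⟹ y^a = 1
          exact ha (mul_right_cancel (by rw [h, one_mul]))
        · -- y^a * x = y^e ⟹ x = y^(e-a)
          refine hxy (e - a) ?_
          have hea : e - a = -a + e := by ring
          rw [hea, zpow_add, zpow_neg, ← he]
          group
      · -- y^a * x = 1
        refine hxy (-a) ?_
        rw [zpow_neg]
        exact eq_inv_of_mul_eq_one_right hst
    · rfl

end Paper
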